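/- Expansion identity for the estimator with cross terms (identity (4.5)/(4.7) of the paper, localized): Let (u, cu), (u_T, cu_T), (σ, cσ), (σ_T, cσ_T) be curl pairs and f square-ν-integrable, and assume σ = μ⁻¹ cu and cσ + β u = f hold ν-a.e. on Ω. Write e = u − u_T, ce = cu − cu_T, E = σ − σ_T, cE = cσ − cσ_T. Then for every ν-measurable K ⊆ Ω, ∫_K μ⁻¹|μ σ_T − cu_T|² dν + ∫_K β⁻¹|cσ_T + β u_T − f|² dν = ∫_K (μ⁻¹|ce|² + β|e|²) dν + ∫_K (β⁻¹|cE|² + μ|E|²) dν − 2 ∫_K E·ce dν + 2 ∫_K cE·e dν. -/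

import Mathlib

open MeasureTheory RealInnerProductSpace

/-!
Both residuals are completed squares. Since `μ σ = cu`, the constitutive
residual is `μ σ_T - cu_T = ce - μ E`, and since `cσ + β u = f`, the equilibrium residual is
`cσ_T + β u_T - f = -(cE + β e)`. For a nonzero weight `b`,
`b⁻¹ ‖x + b y‖² = b⁻¹ ‖x‖² + b ‖y‖² + 2 ⟪x, y⟫`, which gives the identity pointwise a.e.;
the bounds on `μ` and `β` make every term integrable, so it can be integrated termwise.
-/

section InnerProductSpace

variable {E : Type*} [NormedAddCommGroup E] [InnerProductSpace ℝ E]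

theorem inv_mul_norm_add_smul_sq {b : ℝ} (hb : b ≠ 0) (x y : E) :
    b⁻¹ * ‖x + b • y‖ ^ 2 = b⁻¹ * ‖x‖ ^ 2 + b * ‖y‖ ^ 2 + 2 * ⟪x, y⟫ := by
  rw [norm_add_sq_real, norm_smul, real_inner_smul_right, mul_pow, Real.norm_eq_abs, sq_abs]
  field_simp
  ring

theorem inv_mul_norm_smul_sub_sq_of_eq_inv_smul {a : ℝ} (ha : a ≠ 0) {s c sT cT : E}
    (hs : s = a⁻¹ • c) :
    a⁻¹ * ‖a • sT - cT‖ ^ 2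
      = a⁻¹ * ‖c - cT‖ ^ 2 + a * ‖s - sT‖ ^ 2 - 2 * ⟪s - sT, c - cT⟫ := by
  have hsplit : a • sT - cT = (c - cT) + a • (sT - s) := by
    rw [hs, smul_sub, smul_inv_smul₀ ha]; abel
  rw [hsplit, inv_mul_norm_add_smul_sq ha, ← neg_sub s sT, norm_neg, inner_neg_right,
    real_inner_comm]
  ring

theorem inv_mul_norm_add_smul_sub_sq_of_add_smul_eq {b : ℝ} (hb : b ≠ 0) {x y xT yT f : E}
    (hf : x + b • y = f) :
    b⁻¹ * ‖xT + b • yT - f‖ ^ 2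
      = b⁻¹ * ‖x - xT‖ ^ 2 + b * ‖y - yT‖ ^ 2 + 2 * ⟪x - xT, y - yT⟫ := by
  have hsplit : xT + b • yT - f = -((x - xT) + b • (y - yT)) := by
    rw [← hf, smul_sub]; abel
  rw [hsplit, norm_neg, inv_mul_norm_add_smul_sq hb]

end InnerProductSpace

namespace MeasureTheory

variable {α : Type*} [MeasurableSpace α] {ν : Measure α}

theorem MemLp.integrable_inner {E : Type*} [NormedAddCommGroup E] [InnerProductSpace ℝ E]
    {f g : α → E} (hf : MemLp f 2 ν) (hg : MemLp g 2 ν) :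
    Integrable (fun x => ⟪f x, g x⟫) ν :=
  (L2.integrable_inner (𝕜 := ℝ) (hf.toLp f) (hg.toLp g)).congr <| by
    filter_upwards [hf.coeFn_toLp, hg.coeFn_toLp] with x hfx hgx
    rw [hfx, hgx]

section WeightedSquare

variable {F : Type*} [NormedAddCommGroup F] {g : α → F} {w : α → ℝ}

theorem MemLp.integrable_mul_norm_sq {C : ℝ} (hg : MemLp g 2 ν)
    (hw : AEStronglyMeasurable w ν) (hwC : ∀ᵐ x ∂ν, |w x| ≤ C) :
    Integrable (fun x => w x * ‖g x‖ ^ 2) ν :=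
  hg.norm.integrable_sq.bdd_mul hw hwC

theorem MemLp.integrable_inv_mul_norm_sq {c : ℝ} (hg : MemLp g 2 ν) (hw : AEMeasurable w ν)
    (hc : 0 < c) (hcw : ∀ᵐ x ∂ν, c ≤ w x) :
    Integrable (fun x => (w x)⁻¹ * ‖g x‖ ^ 2) ν :=
  hg.integrable_mul_norm_sq hw.inv.aestronglyMeasurable <| hcw.mono fun x hx => by
    rw [abs_inv, abs_of_pos (hc.trans_le hx)]
    exact inv_anti₀ hc hx

end WeightedSquare

theorem integral_eq_add_add_mul_of_ae_eq {F g h k : α → ℝ} (c : ℝ) (hg : Integrable g ν)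
    (hh : Integrable h ν) (hk : Integrable k ν) (hF : ∀ᵐ x ∂ν, F x = g x + h x + c * k x) :
    ∫ x, F x ∂ν = ∫ x, g x ∂ν + ∫ x, h x ∂ν + c * ∫ x, k x ∂ν := by
  rw [integral_congr_ae hF, integral_add _ (hk.const_mul c), integral_add hg hh,
    integral_const_mul]
  exact hg.add hh

end MeasureTheory

theorem estimator_expansion_identity_general
    {Ω : Type*} [MeasurableSpace Ω] (ν : MeasureTheory.Measure Ω)
    (μ β : Ω → ℝ) (m₁ m₂ b₁ b₂ : ℝ)
    (hm₁ : 0 < m₁) (hb₁ : 0 < b₁)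
    (hμmeas : Measurable μ) (hβmeas : Measurable β)
    (hμbd : ∀ᵐ x ∂ν, m₁ ≤ μ x ∧ μ x ≤ m₂)
    (hβbd : ∀ᵐ x ∂ν, b₁ ≤ β x ∧ β x ≤ b₂)
    (u cu uT cuT σ cσ σT cσT f : Ω → EuclideanSpace ℝ (Fin 3))
    (hu : MemLp u 2 ν) (hcu : MemLp cu 2 ν)
    (huT : MemLp uT 2 ν) (hcuT : MemLp cuT 2 ν)
    (hσ : MemLp σ 2 ν) (hcσ : MemLp cσ 2 ν)
    (hσT : MemLp σT 2 ν) (hcσT : MemLp cσT 2 ν)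
    (hconst : ∀ᵐ x ∂ν, σ x = (μ x)⁻¹ • cu x)
    (hmageq : ∀ᵐ x ∂ν, cσ x + β x • u x = f x)
    (K : Set Ω) :
    (∫ x in K, (μ x)⁻¹ * ‖μ x • σT x - cuT x‖ ^ 2 ∂ν)
      + (∫ x in K, (β x)⁻¹ * ‖cσT x + β x • uT x - f x‖ ^ 2 ∂ν)
    = (∫ x in K, ((μ x)⁻¹ * ‖cu x - cuT x‖ ^ 2 + β x * ‖u x - uT x‖ ^ 2) ∂ν)
      + (∫ x in K, ((β x)⁻¹ * ‖cσ x - cσT x‖ ^ 2 + μ x * ‖σ x - σT x‖ ^ 2) ∂ν)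
      - 2 * (∫ x in K, ⟪σ x - σT x, cu x - cuT x⟫ ∂ν)
      + 2 * (∫ x in K, ⟪cσ x - cσT x, u x - uT x⟫ ∂ν) := by
  have hce : MemLp (fun x => cu x - cuT x) 2 ν := hcu.sub hcuT
  have he : MemLp (fun x => u x - uT x) 2 ν := hu.sub huT
  have hcE : MemLp (fun x => cσ x - cσT x) 2 ν := hcσ.sub hcσT
  have hE : MemLp (fun x => σ x - σT x) 2 ν := hσ.sub hσT
  have iμce := (hce.integrable_inv_mul_norm_sq hμmeas.aemeasurable hm₁
    (hμbd.mono fun _ h => h.1)).restrict (s := K)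
  have iβcE := (hcE.integrable_inv_mul_norm_sq hβmeas.aemeasurable hb₁
    (hβbd.mono fun _ h => h.1)).restrict (s := K)
  have iμE := (hE.integrable_mul_norm_sq hμmeas.aestronglyMeasurable
    (hμbd.mono fun _ h => abs_le.2 ⟨by linarith, h.2⟩)).restrict (s := K)
  have iβe := (he.integrable_mul_norm_sq hβmeas.aestronglyMeasurable
    (hβbd.mono fun _ h => abs_le.2 ⟨by linarith, h.2⟩)).restrict (s := K)
  have hconstK := integral_eq_add_add_mul_of_ae_eq
    (F := fun x => (μ x)⁻¹ * ‖μ x • σT x - cuT x‖ ^ 2) (-2) iμce iμE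
    (hE.integrable_inner hce).restrict <| ae_restrict_of_ae <| by
      filter_upwards [hconst, hμbd] with x hx hbd
      rw [inv_mul_norm_smul_sub_sq_of_eq_inv_smul (hm₁.trans_le hbd.1).ne' hx]
      ring
  have hmageqK := integral_eq_add_add_mul_of_ae_eq
    (F := fun x => (β x)⁻¹ * ‖cσT x + β x • uT x - f x‖ ^ 2) 2 iβcE iβe
    (hcE.integrable_inner he).restrict <| ae_restrict_of_ae <| by
      filter_upwards [hmageq, hβbd] with x hx hbd
      exact inv_mul_norm_add_smul_sub_sq_of_add_smul_eq (hb₁.trans_le hbd.1).ne' hx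
  rw [hconstK, hmageqK, integral_add iμce iβe, integral_add iβcE iμE]
  ring

/-- Expansion identity for the estimator with cross terms (identity (4.5)/(4.7)
of the paper, localized to a measurable set K). -/
theorem estimator_expansion_identity
    {Ω : Type*} [MeasurableSpace Ω] (ν : MeasureTheory.Measure Ω)
    (μ β : Ω → ℝ) (m₁ m₂ b₁ b₂ : ℝ)
    (hm₁ : 0 < m₁) (hm₁₂ : m₁ ≤ m₂) (hb₁ : 0 < b₁) (hb₁₂ : b₁ ≤ b₂)
    (hμmeas : Measurable μ) (hβmeas : Measurable β)
    (hμbd : ∀ᵐ x ∂ν, m₁ ≤ μ x ∧ μ x ≤ m₂)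
    (hβbd : ∀ᵐ x ∂ν, b₁ ≤ β x ∧ β x ≤ b₂)
    (u cu uT cuT σ cσ σT cσT f : Ω → EuclideanSpace ℝ (Fin 3))
    (hu : MemLp u 2 ν) (hcu : MemLp cu 2 ν)
    (huT : MemLp uT 2 ν) (hcuT : MemLp cuT 2 ν)
    (hσ : MemLp σ 2 ν) (hcσ : MemLp cσ 2 ν)
    (hσT : MemLp σT 2 ν) (hcσT : MemLp cσT 2 ν)
    (hf : MemLp f 2 ν)
    (hconst : ∀ᵐ x ∂ν, σ x = (μ x)⁻¹ • cu x)
    (hmageq : ∀ᵐ x ∂ν, cσ x + β x • u x = f x)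
    (K : Set Ω) (hK : MeasurableSet K) :
    (∫ x in K, (μ x)⁻¹ * ‖μ x • σT x - cuT x‖ ^ 2 ∂ν)
      + (∫ x in K, (β x)⁻¹ * ‖cσT x + β x • uT x - f x‖ ^ 2 ∂ν)
    = (∫ x in K, ((μ x)⁻¹ * ‖cu x - cuT x‖ ^ 2 + β x * ‖u x - uT x‖ ^ 2) ∂ν)
      + (∫ x in K, ((β x)⁻¹ * ‖cσ x - cσT x‖ ^ 2 + μ x * ‖σ x - σT x‖ ^ 2) ∂ν)
      - 2 * (∫ x in K, ⟪σ x - σT x, cu x - cuT x⟫ ∂ν)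
      + 2 * (∫ x in K, ⟪cσ x - cσT x, u x - uT x⟫ ∂ν) :=
  estimator_expansion_identity_general ν μ β m₁ m₂ b₁ b₂ hm₁ hb₁ hμmeas hβmeas hμbd hβbd u cu uT cuT
    σ cσ σT cσT f hu hcu huT hcuT hσ hcσ hσT hcσT hconst hmageq K
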